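/- (Gradient with respect to the n-th step parameter of the development layer.) Fix d, m, N ∈ ℕ, a sequence x = (x_0, …, x_N) in ℝ^d with increments Δx_i := x_i − x_{i−1}, parameters θ ∈ (Matrix (Fin m) (Fin m) ℝ)^d, and 1 ≤ n ≤ N. Set m_n := M_θ(Δx_n) and E := exp(M_θ(Δx_{n+1})) * ⋯ * exp(M_θ(Δx_N)) (identity if n = N). Let ψ : Matrix (Fin m) (Fin m) ℝ → ℝ be such that ψ̃_n(w) := ψ(w * E) is differentiable at z_n(θ), and let G be the Frobenius gradient of ψ̃_n at z_n(θ), i.e. fderiv ℝ ψ̃_n (z_n(θ)) (Y) = trace(Gᵀ * Y) for all Y. Define φ : (Matrix (Fin m) (Fin m) ℝ)^d → ℝ by φ(ϑ) := ψ̃_n(z_{n−1}(θ) * exp(M_ϑ(Δx_n))). Then for every ξ = (ξ_1, …, ξ_d): fderiv ℝ φ θ (ξ) = Σ_{j=1}^d (Δx_n)^{(j)} · trace( ((d exp)_{m_nᵀ}(z_{n−1}(θ)ᵀ * G))ᵀ * ξ_j ); equivalently, the Frobenius gradient of φ at θ has j-th component (Δx_n)^{(j)} • (d exp)_{m_nᵀ}(z_{n−1}(θ)ᵀ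 * G). -/

import Mathlib

open scoped Matrix

attribute [local instance] Matrix.linftyOpNormedAddCommGroup Matrix.linftyOpNormedRing
  Matrix.linftyOpNormedAlgebra

/-- `M_θ v = ∑ j, v j • θ j`, the trainable linear map of the development layer. -/
noncomputable def devLayerM (d m : ℕ) (θ : Fin d → Matrix (Fin m) (Fin m) ℝ)
    (v : Fin d → ℝ) : Matrix (Fin m) (Fin m) ℝ :=
  ∑ j, v j • θ j

/-- The development layer output `z_n (θ) = exp (M_θ Δx_1) * ⋯ * exp (M_θ Δx_n)`
(ordered product, `z_0 = 1`), where `Δx_i = x i - x (i-1)`. -/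
noncomputable def devLayerZ (d m : ℕ) (x : ℕ → Fin d → ℝ) (n : ℕ)
    (θ : Fin d → Matrix (Fin m) (Fin m) ℝ) : Matrix (Fin m) (Fin m) ℝ :=
  ((List.range n).map
    (fun i => NormedSpace.exp (devLayerM d m θ (x (i + 1) - x i)))).prod

/-!
Write `z = z_{n-1}(θ)` and `A = M_θ(Δx_n)`. Since `z_n(θ) = z * exp A` and `ϑ ↦ M_ϑ(Δx_n)` is
linear, the chain rule gives `(dφ)_θ ξ = tr (Gᵀ z (d exp)_A (M_ξ(Δx_n)))`. The formula then
follows from the identity `tr (B (d exp)_A Y) = tr (((d exp)_{Aᵀ} Bᵀ)ᵀ Y)`. Differentiating the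
exponential series termwise (legitimate on balls, where the derivatives are summably bounded)
gives `(d exp)_A Y = ∑_k (1/k!) ∑_{i<k} A^{k-1-i} Y A^i`, and the identity holds term by term by
cyclicity of the trace.
-/

open Finset ContinuousLinearMap NormedSpace

section ExpFDeriv

variable {𝕂 𝔸 : Type*} [NormedRing 𝔸]

theorem norm_pow_le_norm_one_mul (x : 𝔸) : ∀ i : ℕ, ‖x ^ i‖ ≤ ‖(1 : 𝔸)‖ * ‖x‖ ^ i
  | 0 => by simp
  | i + 1 =>
    calc ‖x ^ (i + 1)‖ ≤ ‖x ^ i‖ * ‖x‖ := pow_succ x i ▸ norm_mul_le _ _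
      _ ≤ ‖(1 : 𝔸)‖ * ‖x‖ ^ i * ‖x‖ := by gcongr; exact norm_pow_le_norm_one_mul x i
      _ = ‖(1 : 𝔸)‖ * ‖x‖ ^ (i + 1) := by ring

theorem hasFDerivAt_pow_eq_sum_mulLeftRight [NontriviallyNormedField 𝕂] [NormedAlgebra 𝕂 𝔸]
    (k : ℕ) (A : 𝔸) :
    HasFDerivAt (fun x : 𝔸 => x ^ k)
      (∑ i ∈ range k, mulLeftRight 𝕂 𝔸 (A ^ (k - 1 - i)) (A ^ i)) A :=
  (hasFDerivAt_pow' k).congr_fderiv <| by ext Y; simp [mul_assoc]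

variable [RCLike 𝕂] [NormedAlgebra 𝕂 𝔸]

variable (𝕂) in
noncomputable def fderivExpTerm (k : ℕ) (A : 𝔸) : 𝔸 →L[𝕂] 𝔸 :=
  (k.factorial⁻¹ : 𝕂) • ∑ i ∈ range k, mulLeftRight 𝕂 𝔸 (A ^ (k - 1 - i)) (A ^ i)

theorem norm_fderivExpTerm_le {R : ℝ} {A : 𝔸} (hA : ‖A‖ ≤ R) (k : ℕ) :
    ‖fderivExpTerm 𝕂 k A‖ ≤ (k.factorial⁻¹ : ℝ) * (k * (‖(1 : 𝔸)‖ ^ 2 * R ^ (k - 1))) := by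
  have hterm : ∀ i ∈ range k,
      ‖mulLeftRight 𝕂 𝔸 (A ^ (k - 1 - i)) (A ^ i)‖ ≤ ‖(1 : 𝔸)‖ ^ 2 * R ^ (k - 1) := by
    intro i hi
    have hk : k - 1 - i + i = k - 1 := Nat.sub_add_cancel (by grind)
    calc _ ≤ ‖A ^ (k - 1 - i)‖ * ‖A ^ i‖ := opNorm_mulLeftRight_apply_apply_le 𝕂 𝔸 _ _
      _ ≤ (‖(1 : 𝔸)‖ * ‖A‖ ^ (k - 1 - i)) * (‖(1 : 𝔸)‖ * ‖A‖ ^ i) := by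
          gcongr <;> exact norm_pow_le_norm_one_mul A _
      _ = ‖(1 : 𝔸)‖ ^ 2 * ‖A‖ ^ (k - 1) := by rw [mul_mul_mul_comm, ← pow_add, hk, sq]
      _ ≤ ‖(1 : 𝔸)‖ ^ 2 * R ^ (k - 1) := by gcongr
  rw [fderivExpTerm, norm_smul, norm_inv, RCLike.norm_natCast]
  gcongr
  simpa using (norm_sum_le _ _).trans (sum_le_sum hterm)

theorem summable_inv_factorial_mul_pow_pred (C R : ℝ) :
    Summable fun k : ℕ => (k.factorial⁻¹ : ℝ) * (k * (C * R ^ (k - 1))) := by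
  rw [← summable_nat_add_iff 1]
  refine ((Real.summable_pow_div_factorial R).mul_left C).congr fun k => ?_
  rw [Nat.add_sub_cancel, Nat.factorial_succ]
  push_cast
  field_simp

variable [CompleteSpace 𝔸]

theorem hasSum_fderivExpTerm (A : 𝔸) :
    HasSum (fun k => fderivExpTerm 𝕂 k A) (fderiv 𝕂 exp A) := by
  set R := ‖A‖ + 1
  have hsum := summable_inv_factorial_mul_pow_pred (‖(1 : 𝔸)‖ ^ 2) R
  have hball : A ∈ Metric.ball (0 : 𝔸) R := by simp [R]
  have hderiv : HasFDerivAt (fun x : 𝔸 => ∑' k, (k.factorial⁻¹ : 𝕂) • x ^ k)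
      (∑' k, fderivExpTerm 𝕂 k A) A :=
    letI := NormedSpace.restrictScalars ℝ 𝕂 𝔸
    hasFDerivAt_tsum_of_isPreconnected hsum Metric.isOpen_ball
      (convex_ball _ _).isPreconnected
      (fun k x _ => (hasFDerivAt_pow_eq_sum_mulLeftRight k x).const_smul (k.factorial⁻¹ : 𝕂))
      (fun k x hx => norm_fderivExpTerm_le (mem_ball_zero_iff.1 hx).le k)
      (Metric.mem_ball_self (by positivity)) (expSeries_summable' 0) hball
  rw [← exp_eq_tsum 𝕂] at hderiv
  rw [hderiv.fderiv]
  exact (Summable.of_norm_bounded hsum fun k =>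
    norm_fderivExpTerm_le (mem_ball_zero_iff.1 hball).le k).hasSum

end ExpFDeriv

namespace Matrix

variable {𝕂 n : Type*} [RCLike 𝕂] [Fintype n] [DecidableEq n]

theorem trace_mul_fderivExpTerm (k : ℕ) (A B Y : Matrix n n 𝕂) :
    (B * fderivExpTerm 𝕂 k A Y).trace = ((fderivExpTerm 𝕂 k Aᵀ Bᵀ)ᵀ * Y).trace := by
  simp only [fderivExpTerm, _root_.smul_apply, _root_.sum_apply,
    mulLeftRight_apply, Matrix.mul_smul, transpose_smul,
    smul_mul, trace_smul, Finset.mul_sum, transpose_sum, sum_mul, trace_sum, transpose_mul,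
    transpose_pow, transpose_transpose]
  congr 1
  refine sum_congr rfl fun i _ => ?_
  rw [← mul_assoc, ← mul_assoc, trace_mul_comm]
  simp only [mul_assoc]

theorem trace_mul_fderiv_exp (A B Y : Matrix n n 𝕂) :
    (B * fderiv 𝕂 exp A Y).trace = ((fderiv 𝕂 exp Aᵀ Bᵀ)ᵀ * Y).trace := by
  have hleft := (((hasSum_fderivExpTerm A).mapL (apply 𝕂 _ Y)).mul_left B).map
    (traceAddMonoidHom n 𝕂) (continuous_id.matrix_trace)
  have hright := ((((hasSum_fderivExpTerm Aᵀ).mapL (apply 𝕂 _ Bᵀ)).matrix_transpose).mul_right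
    Y).map (traceAddMonoidHom n 𝕂) (continuous_id.matrix_trace)
  refine hleft.unique ?_
  convert hright using 1
  · funext k
    exact trace_mul_fderivExpTerm k A B Y
  · rfl

end Matrix

theorem devLayerZ_eq_mul_exp (d m : ℕ) (x : ℕ → Fin d → ℝ) (n : ℕ)
    (θ : Fin d → Matrix (Fin m) (Fin m) ℝ) :
    devLayerZ d m x n θ = devLayerZ d m x (n - 1) θ * exp (devLayerM d m θ (x n - x (n - 1))) := by
  -- at `n = 0` the truncated `0 - 1 = 0` makes the increment `0`, so both sides are `1`
  cases n with
  | zero => simp [devLayerZ, devLayerM]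
  | succ k => simp [devLayerZ, List.range_succ]

theorem hasFDerivAt_devLayerM (d m : ℕ) (v : Fin d → ℝ) (θ : Fin d → Matrix (Fin m) (Fin m) ℝ) :
    HasFDerivAt (devLayerM d m · v)
      (∑ j, v j • proj (R := ℝ) (φ := fun _ : Fin d => Matrix (Fin m) (Fin m) ℝ) j) θ := by
  unfold devLayerM
  exact HasFDerivAt.fun_sum fun j _ => (hasFDerivAt_apply j θ).const_smul (v j)

theorem fderiv_devLayerM_apply (d m : ℕ) (v : Fin d → ℝ) (θ ξ : Fin d → Matrix (Fin m) (Fin m) ℝ) :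
    fderiv ℝ (devLayerM d m · v) θ ξ = devLayerM d m ξ v :=
  (DFunLike.congr_fun (hasFDerivAt_devLayerM d m v θ).fderiv ξ).trans (by simp [devLayerM])

theorem statement16_general (d m : ℕ) (x : ℕ → Fin d → ℝ)
    (θ : Fin d → Matrix (Fin m) (Fin m) ℝ) (n : ℕ)
    (ψt : Matrix (Fin m) (Fin m) ℝ → ℝ)
    (hdiff : DifferentiableAt ℝ ψt (devLayerZ d m x n θ))
    (G : Matrix (Fin m) (Fin m) ℝ)
    (hG : ∀ Y : Matrix (Fin m) (Fin m) ℝ,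
      fderiv ℝ ψt (devLayerZ d m x n θ) Y = (Gᵀ * Y).trace)
    (φ : (Fin d → Matrix (Fin m) (Fin m) ℝ) → ℝ)
    (hφ : ∀ ϑ : Fin d → Matrix (Fin m) (Fin m) ℝ,
      φ ϑ = ψt (devLayerZ d m x (n - 1) θ *
        NormedSpace.exp (devLayerM d m ϑ (x n - x (n - 1)))))
    (ξ : Fin d → Matrix (Fin m) (Fin m) ℝ) :
    fderiv ℝ φ θ ξ =
      ∑ j, (x n - x (n - 1)) j *
        ((fderiv ℝ NormedSpace.exp (devLayerM d m θ (x n - x (n - 1)))ᵀ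
            ((devLayerZ d m x (n - 1) θ)ᵀ * G))ᵀ * ξ j).trace := by
  set v := x n - x (n - 1)
  set z := devLayerZ d m x (n - 1) θ
  set A := devLayerM d m θ v
  have hψt : HasFDerivAt ψt (fderiv ℝ ψt (devLayerZ d m x n θ)) (z * exp A) :=
    devLayerZ_eq_mul_exp d m x n θ ▸ hdiff.hasFDerivAt
  have hexp : HasFDerivAt exp (fderiv ℝ exp A) A :=
    (exp_analytic A).differentiableAt.hasFDerivAt
  -- stated through `fderiv`, whose instances are those of `fderiv ℝ φ θ` in the goal
  have hM := (hasFDerivAt_devLayerM d m v θ).differentiableAt.hasFDerivAt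
  have hφθ := (hψt.comp θ ((hexp.comp θ hM).const_mul z)).congr_of_eventuallyEq (.of_forall hφ)
  have hφξ : fderiv ℝ φ θ ξ =
      fderiv ℝ ψt (devLayerZ d m x n θ) (z * fderiv ℝ exp A (fderiv ℝ (devLayerM d m · v) θ ξ)) :=
    DFunLike.congr_fun hφθ.fderiv ξ
  calc fderiv ℝ φ θ ξ = (Gᵀ * z * fderiv ℝ exp A (devLayerM d m ξ v)).trace := by
        rw [hφξ, fderiv_devLayerM_apply, hG, mul_assoc]
    _ = ((fderiv ℝ exp Aᵀ (zᵀ * G))ᵀ * devLayerM d m ξ v).trace := by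
        rw [Matrix.trace_mul_fderiv_exp, Matrix.transpose_mul, Matrix.transpose_transpose]
    _ = _ := by simp [devLayerM, Matrix.mul_sum, Matrix.trace_sum, Matrix.trace_smul]

/-- Gradient with respect to the `n`-th step parameter of the development layer: with
`E = exp (M_θ Δx_{n+1}) * ⋯ * exp (M_θ Δx_N)`, `ψ̃_n (w) = ψ (w * E)`, `G` the Frobenius
gradient of `ψ̃_n` at `z_n (θ)`, and `φ (ϑ) = ψ̃_n (z_{n-1}(θ) * exp (M_ϑ Δx_n))`, one has
`(d φ)_θ ξ = ∑_j (Δx_n)_j · ⟨(d exp)_{(M_θ Δx_n)ᵀ} (z_{n-1}(θ)ᵀ * G), ξ_j⟩`, i.e. the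
Frobenius gradient of `φ` at `θ` has `j`-th component
`(Δx_n)_j • (d exp)_{(M_θ Δx_n)ᵀ} (z_{n-1}(θ)ᵀ * G)`. -/
theorem statement16 (d m N : ℕ) (x : ℕ → Fin d → ℝ)
    (θ : Fin d → Matrix (Fin m) (Fin m) ℝ) (n : ℕ) (h1 : 1 ≤ n) (hN : n ≤ N)
    (ψ : Matrix (Fin m) (Fin m) ℝ → ℝ)
    (E : Matrix (Fin m) (Fin m) ℝ)
    (hE : E = ((List.range (N - n)).map
      (fun j => NormedSpace.exp (devLayerM d m θ (x (n + 1 + j) - x (n + j))))).prod)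
    (ψt : Matrix (Fin m) (Fin m) ℝ → ℝ) (hψt : ∀ w, ψt w = ψ (w * E))
    (hdiff : DifferentiableAt ℝ ψt (devLayerZ d m x n θ))
    (G : Matrix (Fin m) (Fin m) ℝ)
    (hG : ∀ Y : Matrix (Fin m) (Fin m) ℝ,
      fderiv ℝ ψt (devLayerZ d m x n θ) Y = (Gᵀ * Y).trace)
    (φ : (Fin d → Matrix (Fin m) (Fin m) ℝ) → ℝ)
    (hφ : ∀ ϑ : Fin d → Matrix (Fin m) (Fin m) ℝ,
      φ ϑ = ψt (devLayerZ d m x (n - 1) θ *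
        NormedSpace.exp (devLayerM d m ϑ (x n - x (n - 1)))))
    (ξ : Fin d → Matrix (Fin m) (Fin m) ℝ) :
    fderiv ℝ φ θ ξ =
      ∑ j, (x n - x (n - 1)) j *
        ((fderiv ℝ NormedSpace.exp (devLayerM d m θ (x n - x (n - 1)))ᵀ
            ((devLayerZ d m x (n - 1) θ)ᵀ * G))ᵀ * ξ j).trace :=
  statement16_general d m x θ n ψt hdiff G hG φ hφ ξ
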